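/- For every α ∈ ℂ, the 4-dimensional complex algebra T⁴₀₂(α) with nonzero products e₁e₁ = e₂, e₁e₂ = e₃, e₁e₃ = α e₄, e₂e₂ = e₄, e₃e₁ = -3e₄ is a one-generated nilpotent terminal algebra; moreover for α ≠ β the algebras T⁴₀₂(α) and T⁴₀₂(β) are not isomorphic. -/
import Mathlib


/-- For a multiplication `P` and a linear operator `A`, the bracket
`[A,P](x,y) = A(P(x,y)) - P(A(x),y) - P(x,A(y))`. -/
def opBr {V : Type*} [AddCommGroup V] (P : V → V → V) (A : V → V) (x y : V) : V :=
  A (P x y) - P (A x) y - P x (A y)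

/-- For bilinear `B` and multiplication `P`, the bracket `[B,P]`. -/
def biBr {V : Type*} [AddCommGroup V] (B P : V → V → V) (x y z : V) : V :=
  B (P x y) z + B x (P y z) + B y (P x z) - P (B x y) z - P x (B y z) - P y (B x z)

/-- An algebra with multiplication `P` is terminal if `[[[P,a],P],P] = 0` for all `a`,
where `[P,a]` is the left multiplication operator `P a`. -/
def IsTerminalMul {V : Type*} [AddCommGroup V] (P : V → V → V) : Prop :=
  ∀ a x y z, biBr (opBr P (P a)) P x y z = 0

/-- `prods mul n` is the set of all products of `n + 1` elements, in any association. -/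
def prods {V : Type*} (mul : V → V → V) : ℕ → Set V
  | 0 => Set.univ
  | n + 1 => ⋃ i : Fin (n + 1),
      {z | ∃ a ∈ prods mul i.1, ∃ b ∈ prods mul (n - i.1), z = mul a b}

/-- An algebra is nilpotent if all products of sufficiently many elements vanish. -/
def IsNilpotentMul {V : Type*} [Zero V] (mul : V → V → V) : Prop :=
  ∃ n : ℕ, ∀ x ∈ prods mul n, x = 0

/-- The algebra `(V, mul)` is generated by `g`: every submodule containing `g` and closed
under multiplication is all of `V`. -/
def GeneratedBy (K : Type*) {V : Type*} [Field K] [AddCommGroup V] [Module K V]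
    (mul : V → V → V) (g : V) : Prop :=
  ∀ S : Submodule K V, (∀ x ∈ S, ∀ y ∈ S, mul x y ∈ S) → g ∈ S → ∀ v, v ∈ S


/-- The 4-dimensional algebra `T⁴₀₂(α)` with nonzero products
`e₁e₁ = e₂`, `e₁e₂ = e₃`, `e₁e₃ = α e₄`, `e₂e₂ = e₄`, `e₃e₁ = -3e₄`. -/
def mulT402 (α : ℂ) (u v : Fin 4 → ℂ) : Fin 4 → ℂ :=
  ![0, u 0 * v 0, u 0 * v 1, α * (u 0 * v 2) + u 1 * v 1 - 3 * (u 2 * v 0)]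

lemma mem_prods_succ {V : Type*} (mul : V → V → V) {n : ℕ} {x : V} :
    x ∈ prods mul (n+1) ↔ ∃ i : Fin (n+1), ∃ a ∈ prods mul i.1,
      ∃ b ∈ prods mul (n - i.1), x = mul a b := by
  simp [prods, Set.mem_iUnion]

lemma p0 (α : ℂ) : ∀ n x, x ∈ prods (mulT402 α) (n+1) → x 0 = 0 := by
  intro n x hx
  obtain ⟨i, a, -, b, -, rfl⟩ := (mem_prods_succ _).1 hx
  simp [mulT402]

lemma p1 (α : ℂ) : ∀ n, 1 ≤ n → ∀ x, x ∈ prods (mulT402 α) (n+1) → x 1 = 0 := by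
  intro n hn x hx
  obtain ⟨i, a, ha, b, hb, rfl⟩ := (mem_prods_succ _).1 hx
  rcases Nat.eq_zero_or_pos i.1 with h | h
  · rw [h, Nat.sub_zero] at hb
    obtain ⟨m, rfl⟩ := Nat.exists_eq_add_of_le hn
    rw [Nat.add_comm] at hb
    have := p0 α m b hb
    simp [mulT402, this]
  · obtain ⟨m, hm⟩ := Nat.exists_eq_add_of_le h
    rw [hm] at ha
    have := p0 α m a (by rwa [Nat.add_comm] at ha)
    simp [mulT402, this]

lemma p2 (α : ℂ) : ∀ n, 2 ≤ n → ∀ x, x ∈ prods (mulT402 α) (n+1) → x 2 = 0 := by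
  intro n hn x hx
  obtain ⟨i, a, ha, b, hb, rfl⟩ := (mem_prods_succ _).1 hx
  rcases Nat.eq_zero_or_pos i.1 with h | h
  · rw [h, Nat.sub_zero] at hb
    obtain ⟨m, rfl⟩ := Nat.exists_eq_add_of_le hn
    have hb' : b ∈ prods (mulT402 α) (1 + m + 1) := by
      rw [Nat.add_comm 1 m, Nat.add_assoc]; rwa [Nat.add_comm] at hb
    have := p1 α (1 + m) (by omega) b hb'
    simp [mulT402, this]
  · obtain ⟨m, hm⟩ := Nat.exists_eq_add_of_le h
    rw [hm] at ha
    have := p0 α m a (by rwa [Nat.add_comm] at ha)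
    simp [mulT402, this]

lemma p5 (α : ℂ) : ∀ x ∈ prods (mulT402 α) 5, x = 0 := by
  intro x hx
  have h0 := p0 α 4 x hx
  have h1 := p1 α 4 (by omega) x hx
  have h2 := p2 α 4 (by omega) x hx
  obtain ⟨i, a, ha, b, hb, rfl⟩ := (mem_prods_succ _).1 hx
  funext j
  fin_cases j
  · exact h0
  · exact h1
  · exact h2
  · show mulT402 α a b 3 = 0
    have hi : i.1 ≤ 4 := Nat.lt_succ_iff.1 i.2
    interval_cases h : i.1
    · -- a ∈ prods 0, b ∈ prods 4
      have b0 := p0 α 3 b hb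
      have b1 := p1 α 3 (by omega) b hb
      have b2 := p2 α 3 (by omega) b hb
      simp [mulT402, b0, b1, b2]
    · 
      have a0 := p0 α 0 a ha
      have b0 := p0 α 2 b hb
      have b1 := p1 α 2 (by omega) b hb
      simp [mulT402, a0, b0, b1]
    · 
      have a0 := p0 α 1 a ha
      have a1 := p1 α 1 (by omega) a ha
      have b0 := p0 α 1 b hb
      have b1 := p1 α 1 (by omega) b hb
      simp [mulT402, a0, a1, b0, b1]
    · 
      have a0 := p0 α 2 a ha
      have a1 := p1 α 2 (by omega) a ha
      have b0 := p0 α 0 b hb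
      simp [mulT402, a0, a1, b0]
    · 
      have a0 := p0 α 3 a ha
      have a1 := p1 α 3 (by omega) a ha
      have a2 := p2 α 3 (by omega) a ha
      simp [mulT402, a0, a1, a2]


/-- For every `α`, `T⁴₀₂(α)` is a one-generated nilpotent terminal algebra, and for
`α ≠ β` the algebras `T⁴₀₂(α)` and `T⁴₀₂(β)` are not isomorphic. -/
theorem T402_terminal_nilpotent_oneGenerated_pairwise_nonisomorphic :
    (∀ α : ℂ, IsTerminalMul (mulT402 α) ∧ IsNilpotentMul (mulT402 α) ∧
      ∃ g, GeneratedBy ℂ (mulT402 α) g) ∧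
    (∀ α β : ℂ, α ≠ β →
      ¬ ∃ φ : (Fin 4 → ℂ) ≃ₗ[ℂ] (Fin 4 → ℂ),
          ∀ u v, φ (mulT402 α u v) = mulT402 β (φ u) (φ v)) := by
  constructor
  · intro α
    refine ⟨?_, ⟨5, p5 α⟩, ?_⟩
    · intro a x y z
      funext i
      fin_cases i <;> simp [biBr, opBr, mulT402] <;> ring
    · refine ⟨![1,0,0,0], ?_⟩
      intro S hmul hg v
      have h2 : mulT402 α ![1,0,0,0] ![1,0,0,0] = ![0,1,0,0] := by
        funext i; fin_cases i <;> simp [mulT402]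
      have he2 : (![0,1,0,0] : Fin 4 → ℂ) ∈ S := h2 ▸ hmul _ hg _ hg
      have h3 : mulT402 α ![1,0,0,0] ![0,1,0,0] = ![0,0,1,0] := by
        funext i; fin_cases i <;> simp [mulT402]
      have he3 : (![0,0,1,0] : Fin 4 → ℂ) ∈ S := h3 ▸ hmul _ hg _ he2
      have h4 : mulT402 α ![0,1,0,0] ![0,1,0,0] = ![0,0,0,1] := by
        funext i; fin_cases i <;> simp [mulT402]
      have he4 : (![0,0,0,1] : Fin 4 → ℂ) ∈ S := h4 ▸ hmul _ he2 _ he2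
      have hv : v = v 0 • ![1,0,0,0] + v 1 • ![0,1,0,0] + v 2 • ![0,0,1,0] + v 3 • ![0,0,0,1] := by
        funext i; fin_cases i <;> simp
      rw [hv]
      exact S.add_mem (S.add_mem (S.add_mem (S.smul_mem _ hg) (S.smul_mem _ he2))
        (S.smul_mem _ he3)) (S.smul_mem _ he4)
  · intro α β hab
    rintro ⟨φ, hφ⟩
    set e1 : Fin 4 → ℂ := ![1,0,0,0] with he1
    set A := φ e1 with hA
    have m11 : mulT402 α e1 e1 = ![0,1,0,0] := by funext i; fin_cases i <;> simp [mulT402, he1]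
    have m12 : mulT402 α e1 ![0,1,0,0] = ![0,0,1,0] := by
      funext i; fin_cases i <;> simp [mulT402, he1]
    have m13 : mulT402 α e1 ![0,0,1,0] = α • ![0,0,0,1] := by
      funext i; fin_cases i <;> simp [mulT402, he1]
    have m22 : mulT402 α ![0,1,0,0] ![0,1,0,0] = ![0,0,0,1] := by
      funext i; fin_cases i <;> simp [mulT402]
    set B := φ ![0,1,0,0] with hB
    set C := φ ![0,0,1,0] with hC
    set D := φ ![0,0,0,1] with hD
    have eB : B = mulT402 β A A := by rw [hB, ← m11, hφ]
    have eC : C = mulT402 β A B := by rw [hC, ← m12, hφ]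
    have eD : D = mulT402 β B B := by rw [hD, ← m22, hφ]
    have eAC : α • D = mulT402 β A C := by
      rw [hD, ← map_smul, ← m13, hφ]
    have hB1 : B 1 = A 0 * A 0 := by rw [eB]; simp [mulT402]
    have hB0 : B 0 = 0 := by rw [eB]; simp [mulT402]
    have hB2 : B 2 = A 0 * A 1 := by rw [eB]; simp [mulT402]
    have hC1 : C 1 = A 0 * B 0 := by rw [eC]; simp [mulT402]
    have hC0 : C 0 = 0 := by rw [eC]; simp [mulT402]
    have hC2 : C 2 = A 0 * B 1 := by rw [eC]; simp [mulT402]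
    have hD3 : D 3 = β * (B 0 * B 2) + B 1 * B 1 - 3 * (B 2 * B 0) := by rw [eD]; simp [mulT402]
    have key : α * D 3 = β * (A 0 * C 2) + A 1 * C 1 - 3 * (A 2 * C 0) := by
      have := congrFun eAC 3
      simpa [mulT402] using this
    rcases eq_or_ne (A 0) 0 with ha | ha
    · have hC3 : C 3 = β * (A 0 * B 2) + A 1 * B 1 - 3 * (A 2 * B 0) := by
        rw [eC]; simp [mulT402]
      have hCz : C = 0 := by
        funext i; fin_cases i
        · exact hC0
        · simp [hC1, hB0]
        · simp [hC2, ha]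
        · simp [hC3, ha, hB0, hB1]
      have : (![0,0,1,0] : Fin 4 → ℂ) = 0 := φ.injective (by rw [← hC, hCz, map_zero])
      have := congrFun this 2
      simp at this
    · apply hab
      have h4 : α * (A 0)^4 = β * (A 0)^4 := by
        rw [hD3, hB0, hB1, hC2, hB1, hC1, hB0, hC0] at key
        ring_nf at key ⊢
        linear_combination key
      exact mul_right_cancel₀ (pow_ne_zero 4 ha) h4
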